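/- For every natural number M there exists a finite tree T with S_b(T) − S(T) > M; that is, the difference between the star b-chromatic number and the star chromatic number is unbounded on the class of trees. (In fact, for every n ≥ 1 there is a tree T_n with S_b(T_n) = 2n + 2 and S(T_n) ≤ 3.) -/

import Mathlib

/-!
Definitions for star colorings, star recoloring steps, the strict partial order `≺ₛ`,
star b-vertices, the star (b-)chromatic number, star degrees and related notions,
following Božović, Mesarič Štesl, Peterin,
"On star b-chromatic number of a graph".
-/

variable {V : Type*}

/-- A proper coloring which is a *star coloring*: no path on four vertices
(vertices `a-b-x-y` with the three edges `ab`, `bx`, `xy`) is bicolored,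
i.e. the union of any two color classes induces a star forest. -/
def IsStarColoring (G : SimpleGraph V) (c : V → ℕ) : Prop :=
  (∀ ⦃u w⦄, G.Adj u w → c u ≠ c w) ∧
  ∀ a b x y : V, G.Adj a b → G.Adj b x → G.Adj x y →
    a ≠ x → b ≠ y → a ≠ y → ¬(c a = c x ∧ c b = c y)

/-- The set of colors used by a coloring. -/
def colorsUsed [Fintype V] (c : V → ℕ) : Finset ℕ :=
  Finset.image c Finset.univ

/-- `c'` is obtained from `c` by a *star recoloring step*: some color class `Vᵢ`
of the star coloring `c` is completely recolored, each of its vertices receiving one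
of the remaining colors of `c`, so that the result `c'` is again a star coloring
(using the colors of `c` minus `i`). We write `c' ⊲ₛ c`. -/
def StarRecolorStep [Fintype V] (G : SimpleGraph V) (c' c : V → ℕ) : Prop :=
  IsStarColoring G c ∧ IsStarColoring G c' ∧
  ∃ i ∈ colorsUsed c,
    (∀ v, c v ≠ i → c' v = c v) ∧
    ∀ v, c v = i → c' v ≠ i ∧ c' v ∈ colorsUsed c

/-- A minimal element of the strict partial order `≺ₛ` (the transitive closure of
the star recoloring step relation `⊲ₛ`): a star coloring on which no star
recoloring step can be performed. -/
def IsStarBColoring [Fintype V] (G : SimpleGraph V) (c : V → ℕ) : Prop :=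
  IsStarColoring G c ∧ ∀ c', ¬ StarRecolorStep G c' c

/-- The *star b-chromatic number* `Sᵦ(G)`: the maximum number of colors used by a
minimal element of `≺ₛ`. -/
noncomputable def starBChromaticNumber [Fintype V] (G : SimpleGraph V) : ℕ :=
  sSup {n | ∃ c : V → ℕ, IsStarBColoring G c ∧ (colorsUsed c).card = n}

/-- The *star chromatic number* `S(G)`: the minimum number of colors in a star coloring. -/
noncomputable def starChromaticNumber [Fintype V] (G : SimpleGraph V) : ℕ :=
  sInf {n | ∃ c : V → ℕ, IsStarColoring G c ∧ (colorsUsed c).card = n}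

/-- A color `j` is *blocked* for the vertex `v` under the star coloring `c`
if `j` is the color of `v` itself, or recoloring `v` alone with `j` destroys
the star coloring property. -/
def ColorBlockedFor [DecidableEq V] (G : SimpleGraph V) (c : V → ℕ) (v : V) (j : ℕ) : Prop :=
  j = c v ∨ ¬ IsStarColoring G (Function.update c v j)

/-- A color of `c` which is not blocked for `v` is *available* for `v`. -/
def ColorAvailableFor [Fintype V] [DecidableEq V] (G : SimpleGraph V) (c : V → ℕ)
    (v : V) (j : ℕ) : Prop :=
  j ∈ colorsUsed c ∧ ¬ ColorBlockedFor G c v j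

/-- `u-b-x-w` is an induced path on four vertices of `G`. -/
def IsInducedP4 (G : SimpleGraph V) (u b x w : V) : Prop :=
  G.Adj u b ∧ G.Adj b x ∧ G.Adj x w ∧
  ¬ G.Adj u x ∧ ¬ G.Adj b w ∧ ¬ G.Adj u w ∧
  u ≠ x ∧ b ≠ w ∧ u ≠ w

/-- The relation `~ᵢ` on a color class: two vertices of the same color joined
by an induced path on four vertices. -/
def P4Rel (G : SimpleGraph V) (c : V → ℕ) (u w : V) : Prop :=
  c u = c w ∧ ∃ b x, IsInducedP4 G u b x w

/-- The `P₄`-system of `v`: its equivalence class under the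
reflexive-transitive closure of `~ᵢ`. -/
def P4System (G : SimpleGraph V) (c : V → ℕ) (v : V) : Set V :=
  {u | Relation.ReflTransGen (P4Rel G c) v u}

/-- An available color `j` for `v` is *blocked for the `P₄`-system of `v`* if every
recoloring of the color class of `v` (each vertex receiving an available color)
in which `v` is recolored by `j` yields a bicolored path on four vertices between
two vertices of the `P₄`-system of `v`. -/
def BlockedForP4System [Fintype V] [DecidableEq V] (G : SimpleGraph V) (c : V → ℕ)
    (v : V) (j : ℕ) : Prop :=
  ∀ c' : V → ℕ,
    (∀ u, c u ≠ c v → c' u = c u) →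
    (∀ u, c u = c v → ColorAvailableFor G c u (c' u)) →
    c' v = j →
    ∃ u w b x, u ∈ P4System G c v ∧ w ∈ P4System G c v ∧
      G.Adj u b ∧ G.Adj b x ∧ G.Adj x w ∧ u ≠ x ∧ b ≠ w ∧ u ≠ w ∧
      c' u = c' x ∧ c' b = c' w

/-- A *star b-vertex*: every available color for `v` is blocked for its `P₄`-system. -/
def IsStarBVertex [Fintype V] [DecidableEq V] (G : SimpleGraph V) (c : V → ℕ) (v : V) : Prop :=
  ∀ j, ColorAvailableFor G c v j → BlockedForP4System G c v j

/-- The *star degree* `dˢ_G(v)` of a vertex: the maximum number of colors blocked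
for `v` over all star colorings of `G`. -/
noncomputable def starDegree [Fintype V] [DecidableEq V] (G : SimpleGraph V) (v : V) : ℕ :=
  sSup {n | ∃ c : V → ℕ, IsStarColoring G c ∧
    {j | j ∈ colorsUsed c ∧ ColorBlockedFor G c v j}.ncard = n}

/-- The `mₛ`-degree of a graph: the largest `k` such that `G` has `k` vertices
of star degree at least `k - 1` (equivalently, with the vertices ordered by
non-increasing star degree, `mₛ(G) = max {i : i - 1 ≤ dˢ_G(vᵢ)}`). -/
noncomputable def msDegree [Fintype V] [DecidableEq V] (G : SimpleGraph V) : ℕ :=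
  sSup {k | ∃ s : Finset V, s.card = k ∧ ∀ v ∈ s, k - 1 ≤ starDegree G v}

/-- The maximum degree `Δ(G)` of a graph. -/
noncomputable def maxDeg (G : SimpleGraph V) : ℕ :=
  sSup {d | ∃ v : V, (G.neighborSet v).ncard = d}

/-- The *b-chromatic number* `φ(G)`: the maximum number of colors of a proper coloring
in which every color class contains a vertex whose closed neighborhood contains
all the colors. -/
noncomputable def bChromaticNumber [Fintype V] (G : SimpleGraph V) : ℕ :=
  sSup {k | ∃ c : V → ℕ, (∀ ⦃u w⦄, G.Adj u w → c u ≠ c w) ∧ (colorsUsed c).card = k ∧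
    ∀ i ∈ colorsUsed c, ∃ v, c v = i ∧
      ∀ j ∈ colorsUsed c, ∃ u, (u = v ∨ G.Adj v u) ∧ c u = j}

/-- The join `G ∨ H` of two simple graphs: disjoint union of `G` and `H`
together with all edges between the two vertex sets. -/
def graphJoin {α β : Type*} (G : SimpleGraph α) (H : SimpleGraph β) :
    SimpleGraph (α ⊕ β) where
  Adj x y :=
    (∃ a b, x = Sum.inl a ∧ y = Sum.inl b ∧ G.Adj a b) ∨
    (∃ a b, x = Sum.inr a ∧ y = Sum.inr b ∧ H.Adj a b) ∨
    (∃ a b, x = Sum.inl a ∧ y = Sum.inr b) ∨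
    (∃ a b, x = Sum.inr a ∧ y = Sum.inl b)
  symm := by
    constructor
    rintro x y (⟨a,b,rfl,rfl,h⟩|⟨a,b,rfl,rfl,h⟩|⟨a,b,rfl,rfl⟩|⟨a,b,rfl,rfl⟩)
    · exact Or.inl ⟨b, a, rfl, rfl, h.symm⟩
    · exact Or.inr (Or.inl ⟨b, a, rfl, rfl, h.symm⟩)
    · exact Or.inr (Or.inr (Or.inr ⟨b, a, rfl, rfl⟩))
    · exact Or.inr (Or.inr (Or.inl ⟨b, a, rfl, rfl⟩))
  loopless := by
    constructor
    rintro x (⟨a,b,h1,h2,h⟩|⟨a,b,h1,h2,h⟩|⟨a,b,h1,h2⟩|⟨a,b,h1,h2⟩) <;> subst h1 <;>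
      simp_all [SimpleGraph.irrefl]

/-- `N₂(v)`: vertices at distance exactly two from `v`. -/
def distTwoSet (G : SimpleGraph V) (v : V) : Set V := {u | G.dist v u = 2}

/-- `N₃(v)`: vertices at distance exactly three from `v`. -/
def distThreeSet (G : SimpleGraph V) (v : V) : Set V := {u | G.dist v u = 3}

/-- `X(v)`: vertices at distance two from `v` with no neighbor at distance three from `v`. -/
def XSet (G : SimpleGraph V) (v : V) : Set V :=
  {u | u ∈ distTwoSet G v ∧ ∀ w ∈ distThreeSet G v, ¬ G.Adj u w}

/-- `Y(v)`: vertices at distance two from `v` having a neighbor at distance three from `v`. -/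
def YSet (G : SimpleGraph V) (v : V) : Set V := distTwoSet G v \ XSet G v


/-!
The witnesses are spiders: a centre joined to `k` tops, each top carrying one pendant bottom
vertex. Colouring the centre and all bottoms `0` and the tops `1, …, k` gives a star b-colouring:
recolouring the class `0` makes the centre clash with a top, and recolouring a top gives two tops
the same colour, which together with the centre and the bottom below one of them (both coloured
`0`) forms a bicoloured `P₄`. Conversely, for `k ≥ 2` a star b-colouring with more than `k + 1`
colours would have a colour class inside the bottoms, and each bottom can then move to a colour
avoiding its own, its top's and the centre's, so that class could be recoloured. Hence
`Sᵦ = k + 1`, while colouring by depth gives `S ≤ 3`; take `k = 2n + 1`.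
-/

lemma colorsUsed_comp_of_surjective {W : Type*} [Fintype V] [Fintype W] {f : V → W}
    (hf : f.Surjective) (c : W → ℕ) : colorsUsed (c ∘ f) = colorsUsed c := by
  ext j
  simp [colorsUsed, hf.exists]

lemma StarRecolorStep.exists_unchanged_eq [Fintype V] {G : SimpleGraph V} {c' c : V → ℕ}
    (h : StarRecolorStep G c' c) (v : V) : ∃ w, c w = c' v ∧ c' w = c' v := by
  obtain ⟨-, -, i, -, hkeep, hrecolor⟩ := h
  by_cases hv : c v = i
  · obtain ⟨hne, hmem⟩ := hrecolor v hv
    obtain ⟨w, -, hw⟩ := Finset.mem_image.1 hmem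
    exact ⟨w, hw, by rw [hkeep w (hw ▸ hne), hw]⟩
  · exact ⟨v, (hkeep v hv).symm, rfl⟩

namespace SimpleGraph

namespace Iso

variable {W : Type*} {G : SimpleGraph V} {H : SimpleGraph W}

lemma isStarColoring_comp_iff (e : G ≃g H) {c : W → ℕ} :
    IsStarColoring G (c ∘ e) ↔ IsStarColoring H c := by
  simp only [IsStarColoring, Function.comp_apply, e.surjective.forall, e.map_adj_iff,
    e.injective.ne_iff]

variable [Fintype V] [Fintype W]

lemma starRecolorStep_comp_iff (e : G ≃g H) {c' c : W → ℕ} :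
    StarRecolorStep G (c' ∘ e) (c ∘ e) ↔ StarRecolorStep H c' c := by
  simp only [StarRecolorStep, e.isStarColoring_comp_iff,
    colorsUsed_comp_of_surjective e.surjective, Function.comp_apply, e.surjective.forall]

lemma isStarBColoring_comp_iff (e : G ≃g H) {c : W → ℕ} :
    IsStarBColoring G (c ∘ e) ↔ IsStarBColoring H c := by
  refine and_congr e.isStarColoring_comp_iff
    ⟨fun h c' hc' => h (c' ∘ e) (e.starRecolorStep_comp_iff.2 hc'), fun h c' hc' => ?_⟩
  refine h (c' ∘ e.symm) (e.starRecolorStep_comp_iff.1 ?_)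
  simpa [Function.comp_assoc] using hc'

lemma starBChromaticNumber_eq (e : G ≃g H) :
    starBChromaticNumber G = starBChromaticNumber H := by
  unfold starBChromaticNumber
  congr 1
  ext n
  constructor
  · rintro ⟨c, hc, rfl⟩
    exact ⟨c ∘ e.symm, e.symm.isStarBColoring_comp_iff.2 hc,
      by rw [colorsUsed_comp_of_surjective e.symm.surjective]⟩
  · rintro ⟨c, hc, rfl⟩
    exact ⟨c ∘ e, e.isStarBColoring_comp_iff.2 hc,
      by rw [colorsUsed_comp_of_surjective e.surjective]⟩

lemma starChromaticNumber_eq (e : G ≃g H) : starChromaticNumber G = starChromaticNumber H := by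
  unfold starChromaticNumber
  congr 1
  ext n
  constructor
  · rintro ⟨c, hc, rfl⟩
    exact ⟨c ∘ e.symm, e.symm.isStarColoring_comp_iff.2 hc,
      by rw [colorsUsed_comp_of_surjective e.symm.surjective]⟩
  · rintro ⟨c, hc, rfl⟩
    exact ⟨c ∘ e, e.isStarColoring_comp_iff.2 hc,
      by rw [colorsUsed_comp_of_surjective e.surjective]⟩

end Iso

theorem isTree_fromRel_parent [Finite V] (parent : V → V) (depth : V → ℕ) (root : V)
    (hroot : parent root = root) (hdepth : ∀ v, v ≠ root → depth (parent v) < depth v) :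
    (fromRel fun v w => parent v = w).IsTree := by
  set G := fromRel fun v w : V => parent v = w
  have hadj (v : V) (hv : v ≠ root) : G.Adj v (parent v) :=
    ⟨fun h => (hdepth v hv).ne (by rw [← h]), Or.inl rfl⟩
  have hreach (v : V) : G.Reachable v root := by
    induction v using (InvImage.wf depth wellFounded_lt).induction with
    | _ v ih =>
      by_cases hv : v = root
      · rw [hv]
      · exact (hadj v hv).reachable.trans (ih _ (hdepth v hv))
  have : Nonempty V := ⟨root⟩
  refine isTree_iff_connected_and_card.2 ⟨⟨fun u v => (hreach u).trans (hreach v).symm⟩, ?_⟩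
  let edgeOf : {v // v ≠ root} → G.edgeSet := fun v => ⟨s(v, parent v), hadj v v.2⟩
  have hedge : edgeOf.Bijective := by
    constructor
    · rintro ⟨v, hv⟩ ⟨w, hw⟩ h
      obtain ⟨hvw, -⟩ | ⟨hvw, hwv⟩ := Sym2.eq_iff.1 (congrArg Subtype.val h)
      · exact Subtype.ext hvw
      · dsimp only at hvw hwv
        have hv' := hdepth v hv
        have hw' := hdepth w hw
        rw [hwv] at hv'
        rw [← hvw] at hw'
        omega
    · rintro ⟨e, he⟩
      induction e using Sym2.ind with
      | _ v w =>
        obtain ⟨hvw, rfl | rfl⟩ : v ≠ w ∧ (parent v = w ∨ parent w = v) := he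
        · exact ⟨⟨v, fun h => hvw (by rw [h, hroot])⟩, rfl⟩
        · exact ⟨⟨w, fun h => hvw (by rw [h, hroot])⟩, Subtype.ext Sym2.eq_swap⟩
  classical
  rw [← Nat.card_congr (Equiv.ofBijective _ hedge), ← Finite.card_option]
  exact Nat.card_congr (Equiv.optionSubtypeNe root)

end SimpleGraph

inductive SpiderVertex (k : ℕ)
  | center
  | top (i : Fin k)
  | bot (i : Fin k)
  deriving Fintype

namespace SpiderVertex

variable {k : ℕ}

def parent : SpiderVertex k → SpiderVertex k
  | center => center
  | top _ => center
  | bot i => top i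

def depth : SpiderVertex k → ℕ
  | center => 0
  | top _ => 1
  | bot _ => 2

end SpiderVertex

section Spider

open SpiderVertex

def spider (k : ℕ) : SimpleGraph (SpiderVertex k) :=
  SimpleGraph.fromRel fun v w => parent v = w

lemma isTree_spider (k : ℕ) : (spider k).IsTree :=
  SimpleGraph.isTree_fromRel_parent parent depth center rfl (by
    rintro (_ | _ | _) h <;> simp_all [parent, depth])

variable {k : ℕ}

lemma spider_adj_center_top (i : Fin k) : (spider k).Adj center (top i) := by
  simp [spider, parent]

lemma spider_adj_top_bot (i : Fin k) : (spider k).Adj (top i) (bot i) := by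
  simp [spider, parent]

lemma isStarColoring_spider_iff {c : SpiderVertex k → ℕ} :
    IsStarColoring (spider k) c ↔
      (∀ i, c (top i) ≠ c center) ∧ (∀ i, c (bot i) ≠ c (top i)) ∧
        ∀ i j, i ≠ j → c (top i) = c (top j) → c (bot i) ≠ c center := by
  constructor
  · rintro ⟨hproper, hP4⟩
    refine ⟨fun i => hproper (spider_adj_center_top i).symm,
      fun i => hproper (spider_adj_top_bot i).symm, fun i j hij hc hb => ?_⟩
    exact hP4 (bot i) (top i) center (top j) (spider_adj_top_bot i).symm
      (spider_adj_center_top i).symm (spider_adj_center_top j) (by simp) (by simpa using hij)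
      (by simp) ⟨hb, hc⟩
  · rintro ⟨htop, hbot, hleg⟩
    refine ⟨fun v w hvw => ?_, fun a b x y hab hbx hxy hax hby hay ⟨hax', hby'⟩ => ?_⟩
    · cases v <;> cases w <;> simp_all [spider, parent, eq_comm]
    -- up to reversal, the only `P₄`s of the spider are `bot i - top i - center - top j`
    · cases a <;> cases b <;> cases x <;> cases y <;>
        simp [spider, parent] at hab hbx hxy hax hby hay <;> subst_vars <;>
        first
        | contradiction
        | exact hleg _ _ (Ne.symm hax) hax'.symm hby'.symm
        | exact hleg _ _ hby hby' hax'

lemma isStarColoring_spider_depth : IsStarColoring (spider k) depth :=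
  isStarColoring_spider_iff.2 ⟨by simp [depth], by simp [depth], by simp [depth]⟩

lemma card_colorsUsed_depth_le : (colorsUsed (depth (k := k))).card ≤ 3 := by
  refine (Finset.card_le_card (t := Finset.range 3) ?_).trans_eq (Finset.card_range 3)
  intro j hj
  obtain ⟨v, -, rfl⟩ := Finset.mem_image.1 hj
  cases v <;> simp [depth]

lemma starChromaticNumber_spider_le : starChromaticNumber (spider k) ≤ 3 :=
  (Nat.sInf_le (show _ ∈ {n | ∃ c, IsStarColoring (spider k) c ∧ (colorsUsed c).card = n} from
    ⟨depth, isStarColoring_spider_depth, rfl⟩)).trans card_colorsUsed_depth_le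

def rainbowTopColoring (k : ℕ) : SpiderVertex k → ℕ
  | center => 0
  | top i => i + 1
  | bot _ => 0

lemma colorsUsed_rainbowTopColoring :
    colorsUsed (rainbowTopColoring k) = Finset.range (k + 1) := by
  ext j
  simp only [colorsUsed, Finset.mem_image, Finset.mem_univ, true_and, Finset.mem_range]
  refine ⟨?_, fun hj => ?_⟩
  · rintro ⟨v, rfl⟩
    cases v <;> simp [rainbowTopColoring]
  · rcases j with _ | j
    · exact ⟨center, rfl⟩
    · exact ⟨top ⟨j, by omega⟩, rfl⟩

lemma isStarBColoring_spider_rainbowTopColoring :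
    IsStarBColoring (spider k) (rainbowTopColoring k) := by
  refine ⟨isStarColoring_spider_iff.2 ⟨by simp [rainbowTopColoring], by simp [rainbowTopColoring],
    fun i j hij h _ => hij (Fin.ext (by simpa [rainbowTopColoring] using h))⟩, fun c' hstep => ?_⟩
  obtain ⟨htop, -, hleg⟩ := isStarColoring_spider_iff.1 hstep.2.1
  have hunchanged := hstep.exists_unchanged_eq
  obtain ⟨-, -, i, hi, hkeep, hrecolor⟩ := hstep
  by_cases hi0 : i = 0
  · subst hi0
    obtain ⟨w, hw, hw'⟩ := hunchanged center
    have hcenter := (hrecolor center rfl).1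
    cases w with
    | top t => exact htop t hw'
    | _ => exact hcenter hw.symm
  · have hcenter : c' center = 0 := hkeep center (Ne.symm hi0)
    obtain ⟨v, -, hv⟩ := Finset.mem_image.1 hi
    cases v with
    | top a =>
      obtain ⟨w, hw, hw'⟩ := hunchanged (top a)
      have hrecolored := (hrecolor (top a) hv).1
      cases w with
      | top b =>
        obtain rfl | hab := eq_or_ne a b
        · exact hrecolored (hw.symm.trans hv)
        · refine hleg a b hab hw'.symm ?_
          rw [hcenter, hkeep (bot a) (Ne.symm hi0)]
          rfl
      | _ => exact htop a (hw.symm.trans hcenter.symm)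
    | _ => exact hi0 hv.symm

lemma exists_center_or_top_eq_of_isStarBColoring_spider {c : SpiderVertex k → ℕ}
    (hc : IsStarBColoring (spider k) c) (hcard : 3 < (colorsUsed c).card) {j : ℕ}
    (hj : j ∈ colorsUsed c) : c center = j ∨ ∃ i, c (top i) = j := by
  by_contra! hbottom
  obtain ⟨hcenter, htop_ne⟩ := hbottom
  obtain ⟨hstar, hstuck⟩ := hc
  obtain ⟨htop, hbot, hleg⟩ := isStarColoring_spider_iff.1 hstar
  have hfresh (v : SpiderVertex k) :
      ∃ a ∈ colorsUsed c, a ∉ ({j, c center, c (parent v)} : Finset ℕ) :=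
    Finset.exists_mem_notMem_of_card_lt_card (Finset.card_le_three.trans_lt hcard)
  choose fresh hfresh_mem hfresh_ne using hfresh
  simp only [Finset.mem_insert, Finset.mem_singleton, not_or] at hfresh_ne
  let c' v := if c v = j then fresh v else c v
  have hc'_center : c' center = c center := if_neg hcenter
  have hc'_top (i : Fin k) : c' (top i) = c (top i) := if_neg (htop_ne i)
  refine hstuck c' ⟨hstar, isStarColoring_spider_iff.2 ⟨fun i => ?_, fun i => ?_,
    fun i i' hii' hi => ?_⟩, j, hj, fun v hv => if_neg hv, fun v hv => ?_⟩
  · rw [hc'_top, hc'_center]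
    exact htop i
  · rw [hc'_top]
    by_cases hbj : c (bot i) = j
    · simpa [c', hbj, parent] using (hfresh_ne (bot i)).2.2
    · simpa [c', hbj] using hbot i
  · rw [hc'_top, hc'_top] at hi
    rw [hc'_center]
    by_cases hbj : c (bot i) = j
    · simpa [c', hbj] using (hfresh_ne (bot i)).2.1
    · simpa [c', hbj] using hleg i i' hii' hi
  · simpa [c', hv] using ⟨(hfresh_ne v).1, hfresh_mem v⟩

lemma card_colorsUsed_le_of_isStarBColoring_spider (hk : 2 ≤ k) {c : SpiderVertex k → ℕ}
    (hc : IsStarBColoring (spider k) c) : (colorsUsed c).card ≤ k + 1 := by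
  by_contra! hcard
  have hsub : colorsUsed c ⊆ insert (c center) (Finset.univ.image (c ∘ top)) := fun j hj => by
    rcases exists_center_or_top_eq_of_isStarBColoring_spider hc (by omega) hj with h | ⟨i, h⟩
    · simp [h]
    · simp [← h]
  have himage := Finset.card_image_le (s := Finset.univ) (f := c ∘ top)
  rw [Finset.card_univ, Fintype.card_fin] at himage
  have := (Finset.card_le_card hsub).trans (Finset.card_insert_le _ _)
  omega

lemma starBChromaticNumber_spider (hk : 2 ≤ k) : starBChromaticNumber (spider k) = k + 1 := by
  refine IsGreatest.csSup_eq ⟨⟨rainbowTopColoring k, isStarBColoring_spider_rainbowTopColoring,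
    by simp [colorsUsed_rainbowTopColoring]⟩, ?_⟩
  rintro _ ⟨c, hc, rfl⟩
  exact card_colorsUsed_le_of_isStarBColoring_spider hk hc

end Spider

/-- **Theorem.** The difference `Sᵦ(T) − S(T)` is unbounded on the class of trees:
for every natural number `M` there is a finite tree `T` with `Sᵦ(T) − S(T) > M`.
In fact, for every `n ≥ 1` there is a tree `Tₙ` with `Sᵦ(Tₙ) = 2n + 2` and `S(Tₙ) ≤ 3`. -/
theorem starB_sub_star_unbounded_on_trees :
    (∀ M : ℕ, ∃ (m : ℕ) (T : SimpleGraph (Fin m)), T.IsTree ∧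
        starChromaticNumber T + M < starBChromaticNumber T) ∧
    ∀ n : ℕ, 1 ≤ n → ∃ (m : ℕ) (T : SimpleGraph (Fin m)), T.IsTree ∧
        starBChromaticNumber T = 2 * n + 2 ∧ starChromaticNumber T ≤ 3 := by
  have hspider (n : ℕ) (hn : 1 ≤ n) : ∃ (m : ℕ) (T : SimpleGraph (Fin m)), T.IsTree ∧
      starBChromaticNumber T = 2 * n + 2 ∧ starChromaticNumber T ≤ 3 := by
    let e := (spider (2 * n + 1)).overFinIso rfl
    refine ⟨_, _, e.isTree_iff.1 (isTree_spider _), ?_, ?_⟩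
    · rw [← e.starBChromaticNumber_eq, starBChromaticNumber_spider (by omega)]
    · exact e.starChromaticNumber_eq ▸ starChromaticNumber_spider_le
  refine ⟨fun M => ?_, hspider⟩
  obtain ⟨m, T, hT, hb, hs⟩ := hspider (M + 1) le_add_self
  exact ⟨m, T, hT, by omega⟩
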